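/- Fix α ∈ ℂ with Re α > 0 and Im α > 0. Then the function r ↦ H(α,r) is strictly increasing on (0,∞). -/

import Mathlib

/-- `w α r = √(1 + α² sinh² r)` (principal branch). -/
noncomputable def w (α : ℂ) (r : ℝ) : ℂ :=
  (1 + α ^ 2 * (Real.sinh r : ℂ) ^ 2) ^ (1 / 2 : ℂ)

/-- `φ(α,r) = α log((α cosh r + w)/√(α²−1)) + (1/2) log((cosh r − w)/(cosh r + w))`
(principal branches). -/
noncomputable def phi (α : ℂ) (r : ℝ) : ℂ :=
  α * Complex.log ((α * (Real.cosh r : ℂ) + w α r) / ((α ^ 2 - 1) ^ (1 / 2 : ℂ))) +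
    (1 / 2 : ℂ) * Complex.log (((Real.cosh r : ℂ) - w α r) / ((Real.cosh r : ℂ) + w α r))
/-- `H(α,r) = Re[2α log(α cosh r + w) − α log(α²−1)]
  + log|(cosh r − w)/(cosh r + w)|` where `w = √(1 + α² sinh² r)`
(principal branches). -/
noncomputable def H (α : ℂ) (r : ℝ) : ℝ :=
  (2 * α * Complex.log (α * (Real.cosh r : ℂ) + w α r) -
      α * Complex.log (α ^ 2 - 1)).re +
    Real.log ‖((Real.cosh r : ℂ) - w α r) / ((Real.cosh r : ℂ) + w α r)‖


/-!
`H α` is the real part of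
`F(r) = 2α log(α cosh r + w) - α log(α² - 1) + log(cosh r - w) - log(cosh r + w)`,
and the relations `w² = 1 + α² sinh² r`, `cosh² r = 1 + sinh² r` collapse `F'` to `2w / sinh r`.
When `Re α, Im α > 0` the radicand `1 + α² sinh² r` lies in the open upper half-plane for `r > 0`,
so its principal square root `w` lies in the open first quadrant: all logarithms above are
differentiable, and `H' = 2 Re w / sinh r > 0`.
-/

namespace Complex

lemma re_cpow_inv_two_pos {z : ℂ} (hz : z ∈ slitPlane) : 0 < (z ^ (2⁻¹ : ℂ)).re := by
  rw [cpow_inv_two_re, Real.sqrt_pos]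
  rcases hz with hre | him
  · linarith [norm_nonneg z]
  · linarith [neg_abs_le z.re, abs_re_lt_norm.2 him]

lemma im_cpow_inv_two_pos {z : ℂ} (hz : 0 < z.im) : 0 < (z ^ (2⁻¹ : ℂ)).im := by
  rw [cpow_inv_two_im_eq_sqrt hz.le, Real.sqrt_pos]
  linarith [le_abs_self z.re, abs_re_lt_norm.2 hz.ne']

end Complex

open Complex

lemma im_one_add_sq_mul_sq_pos {α : ℂ} (hre : 0 < α.re) (him : 0 < α.im) {s : ℝ} (hs : s ≠ 0) :
    0 < (1 + α ^ 2 * (s : ℂ) ^ 2).im := by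
  have : (1 + α ^ 2 * (s : ℂ) ^ 2).im = 2 * α.re * α.im * s ^ 2 := by
    simp only [add_im, one_im, sq, mul_im, mul_re, ofReal_re, ofReal_im]
    ring
  rw [this]
  positivity

lemma w_eq_cpow_inv_two (α : ℂ) (r : ℝ) :
    w α r = (1 + α ^ 2 * (Real.sinh r : ℂ) ^ 2) ^ (2⁻¹ : ℂ) := by
  rw [w, one_div]

lemma w_sq (α : ℂ) (r : ℝ) : w α r ^ 2 = 1 + α ^ 2 * (Real.sinh r : ℂ) ^ 2 := by
  rw [w_eq_cpow_inv_two, cpow_ofNat_inv_pow]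

lemma w_ne_zero {α : ℂ} {r : ℝ} (h : 1 + α ^ 2 * (Real.sinh r : ℂ) ^ 2 ≠ 0) : w α r ≠ 0 := by
  rw [← w_sq] at h
  exact pow_ne_zero_iff two_ne_zero |>.1 h

lemma re_w_pos {α : ℂ} (hre : 0 < α.re) (him : 0 < α.im) {r : ℝ} (hr : 0 < r) :
    0 < (w α r).re := by
  rw [w_eq_cpow_inv_two]
  exact re_cpow_inv_two_pos
    (.inr (im_one_add_sq_mul_sq_pos hre him (Real.sinh_pos_iff.2 hr).ne').ne')

lemma im_w_pos {α : ℂ} (hre : 0 < α.re) (him : 0 < α.im) {r : ℝ} (hr : 0 < r) :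
    0 < (w α r).im := by
  rw [w_eq_cpow_inv_two]
  exact im_cpow_inv_two_pos (im_one_add_sq_mul_sq_pos hre him (Real.sinh_pos_iff.2 hr).ne')

lemma hasDerivAt_w {α : ℂ} {r : ℝ} (h : 1 + α ^ 2 * (Real.sinh r : ℂ) ^ 2 ∈ slitPlane) :
    HasDerivAt (w α) (α ^ 2 * Real.sinh r * Real.cosh r / w α r) r := by
  have hsinh : HasDerivAt (fun x : ℝ => (Real.sinh x : ℂ)) (Real.cosh r) r :=
    (Real.hasDerivAt_sinh r).ofReal_comp
  have hroot := (hasStrictDerivAt_cpow_const (c := 2⁻¹) h).hasDerivAt.comp r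
    (((hsinh.pow 2).const_mul (α ^ 2)).const_add 1)
  rw [show (2⁻¹ : ℂ) - 1 = -2⁻¹ by norm_num, cpow_neg, ← w_eq_cpow_inv_two] at hroot
  refine (hroot.congr_deriv ?_).congr_of_eventuallyEq (.of_eq (funext (w_eq_cpow_inv_two α)))
  have hw0 := w_ne_zero (slitPlane_ne_zero h)
  field_simp
  push_cast
  ring

/-- Splitting the logarithm of the quotient in `H` keeps every logarithm away from its branch
cut; `H_eq_re_complexH` shows that the real part is unaffected. -/
noncomputable def complexH (α : ℂ) (r : ℝ) : ℂ :=
  2 * α * log (α * Real.cosh r + w α r) - α * log (α ^ 2 - 1) +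
    (log (Real.cosh r - w α r) - log (Real.cosh r + w α r))

lemma H_eq_re_complexH {α : ℂ} {r : ℝ} (hw : (w α r).im ≠ 0) : H α r = (complexH α r).re := by
  have hsub : (Real.cosh r - w α r : ℂ) ≠ 0 := fun h => hw (by simpa using congrArg im h)
  have hadd : (Real.cosh r + w α r : ℂ) ≠ 0 := fun h => hw (by simpa using congrArg im h)
  simp only [H, complexH, add_re, sub_re, log_re, norm_div]
  rw [Real.log_div (norm_ne_zero_iff.2 hsub) (norm_ne_zero_iff.2 hadd)]

lemma hasDerivAt_complexH {α : ℂ} (hre : 0 < α.re) (him : 0 < α.im) {r : ℝ} (hr : 0 < r) :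
    HasDerivAt (complexH α) (2 * w α r / Real.sinh r) r := by
  have hz := im_one_add_sq_mul_sq_pos hre him (Real.sinh_pos_iff.2 hr).ne'
  have hwim := im_w_pos hre him hr
  have hw := hasDerivAt_w (.inr hz.ne')
  have hcosh : HasDerivAt (fun x : ℝ => (Real.cosh x : ℂ)) (Real.sinh r) r :=
    (Real.hasDerivAt_cosh r).ofReal_comp
  have hg : α * Real.cosh r + w α r ∈ slitPlane :=
    .inr (by simp only [add_im, im_mul_ofReal]; positivity)
  have hsub : Real.cosh r - w α r ∈ slitPlane := .inr (by simpa using hwim.ne')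
  have hadd : Real.cosh r + w α r ∈ slitPlane := .inr (by simpa using hwim.ne')
  have hF := ((((hcosh.const_mul α).add hw).clog_real hg).const_mul (2 * α)).sub_const
    (α * log (α ^ 2 - 1)) |>.add
      ((hcosh.sub hw).clog_real hsub |>.sub ((hcosh.add hw).clog_real hadd))
  refine hF.congr_deriv ?_
  have hS : (Real.sinh r : ℂ) ≠ 0 := ofReal_ne_zero.2 (Real.sinh_pos_iff.2 hr).ne'
  have hW : w α r ≠ 0 := w_ne_zero (slitPlane_ne_zero (.inr hz.ne'))
  have hg0 := slitPlane_ne_zero hg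
  have hsub0 := slitPlane_ne_zero hsub
  have hadd0 := slitPlane_ne_zero hadd
  have hC : (Real.cosh r : ℂ) ^ 2 = 1 + (Real.sinh r : ℂ) ^ 2 := by
    norm_cast
    rw [Real.cosh_sq]
    ring
  simp only [Pi.add_apply, Pi.sub_apply]
  field_simp
  linear_combination 2 * w α r ^ 2 * (α * Real.cosh r + w α r) * (w_sq α r - hC)

lemma hasDerivAt_H {α : ℂ} (hre : 0 < α.re) (him : 0 < α.im) {r : ℝ} (hr : 0 < r) :
    HasDerivAt (H α) (2 * (w α r).re / Real.sinh r) r := by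
  have hre_deriv := reCLM.hasFDerivAt.comp_hasDerivAt r (hasDerivAt_complexH hre him hr)
  simp only [Function.comp_def, reCLM_apply, div_ofReal_re, mul_re, re_ofNat, im_ofNat,
    zero_mul, sub_zero] at hre_deriv
  refine hre_deriv.congr_of_eventuallyEq ?_
  filter_upwards [Ioi_mem_nhds hr] with x hx
  exact H_eq_re_complexH (im_w_pos hre him hx).ne'

/-- For `Re α > 0`, `Im α > 0`, the function `r ↦ H(α,r)` is strictly increasing
on `(0,∞)`. -/
theorem H_strictMonoOn (α : ℂ) (hre : 0 < α.re) (him : 0 < α.im) :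
    StrictMonoOn (fun r : ℝ => H α r) (Set.Ioi 0) := by
  refine strictMonoOn_of_deriv_pos (convex_Ioi 0)
    (fun r hr => (hasDerivAt_H hre him hr).continuousAt.continuousWithinAt) fun r hr => ?_
  rw [interior_Ioi] at hr
  rw [(hasDerivAt_H hre him hr).deriv]
  exact div_pos (mul_pos two_pos (re_w_pos hre him hr)) (Real.sinh_pos_iff.2 hr)
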